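/- Let m ≥ 1, b ≥ 1, g = m+b, and suppose during one round of the (m,b) game Breaker's claimed vertices v₁,…,v_b each maximise the B-potential at the time of claiming, and Maker then claims u₁,…,u_m. With λ = (b+1)^{−1/m}, the total Maker increase Δ_M = Σ_{j=1}^m Δ_{M←u_j}(σ after previous claims) is at most the total Breaker decrease Δ_B = Σ_{i=1}^b Δ_{B←v_i}(σ at time of claiming v_i), i.e. Δ_M ≤ Δ_B. -/

import Mathlib

open scoped Classical

inductive Mark : Type
  | U | M | B
deriving DecidableEq

noncomputable def wS {V : Type*} (lam : ℝ) (σ : V → Mark) (S : Finset V) : ℝ :=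
  if ∀ v ∈ S, σ v ≠ Mark.B then lam ^ (S.filter fun v => σ v = Mark.U).card else 0

noncomputable def totalW {V : Type*} (lam : ℝ) (E : Set (Finset V)) (σ : V → Mark) : ℝ :=
  ∑' S : E, wS lam σ S.1

section Aux
variable {V : Type*} {lam : ℝ} {E : Set (Finset V)}

lemma wS_nonneg (hl : 0 ≤ lam) (σ : V → Mark) (S : Finset V) : 0 ≤ wS lam σ S := by
  unfold wS; split
  · exact pow_nonneg hl _
  · exact le_refl 0

lemma wS_update_of_not_mem {σ : V → Mark} {v : V} {S : Finset V} (hv : v ∉ S) (mk : Mark) :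
    wS lam (Function.update σ v mk) S = wS lam σ S := by
  have hupd : ∀ w ∈ S, Function.update σ v mk w = σ w := fun w hw =>
    Function.update_of_ne (by rintro rfl; exact hv hw) _ _
  unfold wS
  have h1 : (∀ w ∈ S, Function.update σ v mk w ≠ Mark.B) ↔ (∀ w ∈ S, σ w ≠ Mark.B) :=
    forall₂_congr fun w hw => by rw [hupd w hw]
  rw [if_congr h1 rfl rfl, Finset.filter_congr (fun w hw => by rw [hupd w hw])]

lemma wS_update_B_of_mem {σ : V → Mark} {v : V} {S : Finset V} (hv : v ∈ S) :
    wS lam (Function.update σ v Mark.B) S = 0 := by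
  unfold wS
  rw [if_neg]
  push_neg
  exact ⟨v, hv, by simp⟩

lemma wS_update_M_of_mem (hl : 0 < lam) {σ : V → Mark} {v : V} {S : Finset V}
    (hv : v ∈ S) (hU : σ v = Mark.U) :
    wS lam (Function.update σ v Mark.M) S = lam⁻¹ * wS lam σ S := by
  unfold wS
  have h1 : (∀ w ∈ S, Function.update σ v Mark.M w ≠ Mark.B) ↔ (∀ w ∈ S, σ w ≠ Mark.B) := by
    constructor <;> intro h w hw
    · by_cases hwv : w = v
      · subst hwv; rw [hU]; simp
      · have := h w hw; rwa [Function.update_of_ne hwv] at this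
    · by_cases hwv : w = v
      · subst hwv; simp
      · rw [Function.update_of_ne hwv]; exact h w hw
  rw [if_congr h1 rfl rfl]
  split
  · have hfil : S.filter (fun w => Function.update σ v Mark.M w = Mark.U)
        = (S.filter (fun w => σ w = Mark.U)).erase v := by
      ext w
      simp only [Finset.mem_filter, Finset.mem_erase]
      constructor
      · rintro ⟨hwS, hwU⟩
        have hwv : w ≠ v := by rintro rfl; simp at hwU
        rw [Function.update_of_ne hwv] at hwU
        exact ⟨hwv, hwS, hwU⟩
      · rintro ⟨hwv, hwS, hwU⟩
        rw [Function.update_of_ne hwv]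
        exact ⟨hwS, hwU⟩
    have hvmem : v ∈ S.filter (fun w => σ w = Mark.U) := Finset.mem_filter.mpr ⟨hv, hU⟩
    rw [hfil, Finset.card_erase_of_mem hvmem]
    obtain ⟨c, hc⟩ : ∃ c, (S.filter (fun w => σ w = Mark.U)).card = c + 1 := by
      have := Finset.card_pos.mpr ⟨v, hvmem⟩
      exact ⟨(S.filter (fun w => σ w = Mark.U)).card - 1, by omega⟩
    rw [hc]
    simp only [Nat.add_sub_cancel, pow_succ]
    field_simp
  · rw [mul_zero]

lemma wS_update_B_le (hl : 0 ≤ lam) (σ : V → Mark) (v : V) (S : Finset V) :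
    wS lam (Function.update σ v Mark.B) S ≤ wS lam σ S := by
  by_cases hv : v ∈ S
  · rw [wS_update_B_of_mem hv]; exact wS_nonneg hl σ S
  · rw [wS_update_of_not_mem hv]

lemma one_le_inv_lam (hl : 0 < lam) (hle : lam ≤ 1) : 1 ≤ lam⁻¹ := by
  nlinarith [mul_inv_cancel₀ hl.ne', inv_nonneg.mpr hl.le]

lemma wS_update_M_le (hl : 0 < lam) (hle : lam ≤ 1) (σ : V → Mark) {v : V}
    (hU : σ v = Mark.U) (S : Finset V) :
    wS lam (Function.update σ v Mark.M) S ≤ lam⁻¹ * wS lam σ S := by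
  by_cases hv : v ∈ S
  · rw [wS_update_M_of_mem hl hv hU]
  · rw [wS_update_of_not_mem hv]
    nlinarith [wS_nonneg hl.le σ S, one_le_inv_lam hl hle]

lemma summable_update_B (hl : 0 ≤ lam) {σ : V → Mark}
    (h : Summable fun S : E => wS lam σ S.1) (v : V) :
    Summable fun S : E => wS lam (Function.update σ v Mark.B) S.1 :=
  Summable.of_nonneg_of_le (fun S => wS_nonneg hl _ _)
    (fun S => wS_update_B_le hl σ v S.1) h

lemma summable_update_M (hl : 0 < lam) (hle : lam ≤ 1) {σ : V → Mark} {v : V}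
    (hU : σ v = Mark.U) (h : Summable fun S : E => wS lam σ S.1) :
    Summable fun S : E => wS lam (Function.update σ v Mark.M) S.1 :=
  Summable.of_nonneg_of_le (fun S => wS_nonneg hl.le _ _)
    (fun S => wS_update_M_le hl hle σ hU S.1) (h.mul_left lam⁻¹)

end Aux


/-- The B-potential of `v`: the decrease in total danger when Breaker claims `v`. -/
noncomputable def deltaB {V : Type*} (lam : ℝ) (E : Set (Finset V)) (σ : V → Mark)
    (v : V) : ℝ :=
  totalW lam E σ - totalW lam E (Function.update σ v Mark.B)

/-- The M-potential of `v`: the increase in total danger when Maker claims `v`. -/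
noncomputable def deltaM {V : Type*} (lam : ℝ) (E : Set (Finset V)) (σ : V → Mark)
    (v : V) : ℝ :=
  totalW lam E (Function.update σ v Mark.M) - totalW lam E σ

/-- Beck's value `λ = (b+1)^{−1/m}`, for which `λ^{−m} − 1 = b`. -/
noncomputable def beckLam (m b : ℕ) : ℝ := ((b : ℝ) + 1) ^ (-(1 : ℝ) / m)

noncomputable def Dpot {V : Type*} (lam : ℝ) (E : Set (Finset V)) (σ : V → Mark)
    (v : V) : ℝ :=
  ∑' S : E, if v ∈ S.1 then wS lam σ S.1 else 0

section Aux2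
variable {V : Type*} {lam : ℝ} {E : Set (Finset V)} {σ : V → Mark} {v w : V}

lemma summable_D (hl : 0 ≤ lam) (h : Summable fun S : E => wS lam σ S.1) :
    Summable fun S : E => if v ∈ S.1 then wS lam σ S.1 else 0 :=
  Summable.of_nonneg_of_le
    (fun S => by split <;> [exact wS_nonneg hl _ _; exact le_refl 0])
    (fun S => by split <;> [exact le_refl _; exact wS_nonneg hl _ _]) h

lemma Dpot_nonneg (hl : 0 ≤ lam) : 0 ≤ Dpot lam E σ v :=
  tsum_nonneg fun S => by
    split <;> [exact wS_nonneg hl _ _; exact le_refl 0]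

lemma deltaB_eq (hl : 0 ≤ lam) (h : Summable fun S : E => wS lam σ S.1) :
    deltaB lam E σ v = Dpot lam E σ v := by
  have key : ∀ S : E, wS lam (Function.update σ v Mark.B) S.1
      = wS lam σ S.1 - (if v ∈ S.1 then wS lam σ S.1 else 0) := by
    intro S
    by_cases hv : v ∈ S.1
    · simp [hv, wS_update_B_of_mem hv]
    · simp [hv, wS_update_of_not_mem hv]
  unfold deltaB totalW
  rw [tsum_congr key, Summable.tsum_sub h (summable_D hl h)]
  unfold Dpot
  ring

lemma deltaM_eq (hl : 0 < lam) (hU : σ v = Mark.U)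
    (h : Summable fun S : E => wS lam σ S.1) :
    deltaM lam E σ v = (lam⁻¹ - 1) * Dpot lam E σ v := by
  have key : ∀ S : E, wS lam (Function.update σ v Mark.M) S.1
      = wS lam σ S.1 + (lam⁻¹ - 1) * (if v ∈ S.1 then wS lam σ S.1 else 0) := by
    intro S
    by_cases hv : v ∈ S.1
    · rw [wS_update_M_of_mem hl hv hU, if_pos hv]; ring
    · rw [wS_update_of_not_mem hv, if_neg hv]; ring
  unfold deltaM totalW
  rw [tsum_congr key, Summable.tsum_add h (((summable_D hl.le h)).mul_left _), tsum_mul_left]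
  unfold Dpot
  ring

lemma Dpot_update_B_le (hl : 0 ≤ lam) (h : Summable fun S : E => wS lam σ S.1) :
    Dpot lam E (Function.update σ w Mark.B) v ≤ Dpot lam E σ v := by
  refine Summable.tsum_le_tsum (fun S => ?_) (summable_D hl (summable_update_B hl h w))
    (summable_D hl h)
  split
  · exact wS_update_B_le hl σ w S.1
  · exact le_refl 0

lemma Dpot_update_M_le (hl : 0 < lam) (hle : lam ≤ 1) (hU : σ w = Mark.U)
    (h : Summable fun S : E => wS lam σ S.1) :
    Dpot lam E (Function.update σ w Mark.M) v ≤ lam⁻¹ * Dpot lam E σ v := by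
  unfold Dpot
  rw [← tsum_mul_left]
  refine Summable.tsum_le_tsum (fun S => ?_)
    (summable_D hl.le (summable_update_M hl hle hU h))
    ((summable_D hl.le h).mul_left _)
  split
  · exact wS_update_M_le hl hle σ hU S.1
  · rw [mul_zero]

end Aux2

lemma beckLam_pos (m b : ℕ) : 0 < beckLam m b :=
  Real.rpow_pos_of_pos (by positivity) _

lemma beckLam_le_one (m b : ℕ) : beckLam m b ≤ 1 :=
  Real.rpow_le_one_of_one_le_of_nonpos
    (by nlinarith [Nat.cast_nonneg (α := ℝ) b])
    (by apply div_nonpos_of_nonpos_of_nonneg <;> [norm_num; exact Nat.cast_nonneg m])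

lemma beckLam_inv_pow (m b : ℕ) (hm : 1 ≤ m) : (beckLam m b)⁻¹ ^ m = (b : ℝ) + 1 := by
  have hb1 : (0:ℝ) < (b:ℝ) + 1 := by positivity
  have hm' : (m:ℝ) ≠ 0 := Nat.cast_ne_zero.mpr (by omega)
  have h1 : (beckLam m b)⁻¹ = ((b:ℝ) + 1) ^ ((1:ℝ)/m) := by
    rw [beckLam, neg_div, Real.rpow_neg hb1.le, inv_inv]
  rw [h1, ← Real.rpow_natCast (((b:ℝ) + 1) ^ ((1:ℝ)/m)) m, ← Real.rpow_mul hb1.le,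
    one_div, inv_mul_cancel₀ hm', Real.rpow_one]

/-- One round of the `(m,b)` game with `λ = (b+1)^{−1/m}`: if Breaker claims `v 0, …,
v (b−1)` one by one, each greedily maximising the B-potential over the unclaimed
elements, producing configurations `ρ 0 = σ0, ρ 1, …, ρ b`, and then Maker claims
unclaimed elements `u 0, …, u (m−1)`, producing `τ 0 = ρ b, τ 1, …, τ m`, then the total
Maker increase `Δ_M = Σ_j Δ_{M←u_j}` is at most the total Breaker decrease
`Δ_B = Σ_i Δ_{B←v_i}`. -/
theorem stmt_19 {V : Type*} (m b : ℕ) (hm : 1 ≤ m) (hb : 1 ≤ b)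
    (E : Set (Finset V)) (σ0 : V → Mark)
    (hsum : Summable fun S : E => wS (beckLam m b) σ0 S.1)
    (v u : ℕ → V) (ρ τ : ℕ → V → Mark)
    (hρ0 : ρ 0 = σ0)
    (hρs : ∀ i < b, ρ (i + 1) = Function.update (ρ i) (v i) Mark.B)
    (hvU : ∀ i < b, ρ i (v i) = Mark.U)
    (hgreedy : ∀ i < b, ∀ w : V, ρ i w = Mark.U →
      deltaB (beckLam m b) E (ρ i) w ≤ deltaB (beckLam m b) E (ρ i) (v i))
    (hτ0 : τ 0 = ρ b)
    (hτs : ∀ j < m, τ (j + 1) = Function.update (τ j) (u j) Mark.M)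
    (huU : ∀ j < m, τ j (u j) = Mark.U) :
    ∑ j ∈ Finset.range m, deltaM (beckLam m b) E (τ j) (u j)
      ≤ ∑ i ∈ Finset.range b, deltaB (beckLam m b) E (ρ i) (v i) := by
  set lam := beckLam m b with hlam
  have hl : 0 < lam := beckLam_pos m b
  have hle : lam ≤ 1 := beckLam_le_one m b
  have hpow : lam⁻¹ ^ m = (b:ℝ) + 1 := beckLam_inv_pow m b hm
  have hinv1 : 1 ≤ lam⁻¹ := one_le_inv_lam hl hle
  have hbpos : (0:ℝ) < b := Nat.cast_pos.mpr (by omega)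
  have hSρ : ∀ i, i ≤ b → Summable fun S : E => wS lam (ρ i) S.1 := by
    intro i
    induction i with
    | zero => intro _; rw [hρ0]; exact hsum
    | succ n ih =>
      intro h
      simp only [hρs n (by omega)]
      exact summable_update_B hl.le (ih (by omega)) _
  have hSτ : ∀ j, j ≤ m → Summable fun S : E => wS lam (τ j) S.1 := by
    intro j
    induction j with
    | zero => intro _; rw [hτ0]; exact hSρ b le_rfl
    | succ n ih =>
      intro h
      simp only [hτs n (by omega)]
      exact summable_update_M hl hle (huU n (by omega)) (ih (by omega))
  have hρstep : ∀ i, i < b → ∀ x, ρ (i+1) x = Mark.U → ρ i x = Mark.U := by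
    intro i hi x h
    rw [hρs i hi] at h
    by_cases hx : x = v i
    · subst hx; rw [Function.update_self] at h; exact absurd h (by simp)
    · rwa [Function.update_of_ne hx] at h
  have hρU : ∀ k, k ≤ b → ∀ i, i ≤ k → ∀ x, ρ k x = Mark.U → ρ i x = Mark.U := by
    intro k
    induction k with
    | zero =>
      intro _ i hi x h
      have : i = 0 := by omega
      subst this; exact h
    | succ n ih =>
      intro h i hi x hx
      by_cases hin : i = n + 1
      · subst hin; exact hx
      · exact ih (by omega) i (by omega) x (hρstep n (by omega) x hx)
  have hτstep : ∀ j, j < m → ∀ x, τ (j+1) x = Mark.U → τ j x = Mark.U := by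
    intro j hj x h
    rw [hτs j hj] at h
    by_cases hx : x = u j
    · subst hx; rw [Function.update_self] at h; exact absurd h (by simp)
    · rwa [Function.update_of_ne hx] at h
  have hτU : ∀ k, k ≤ m → ∀ x, τ k x = Mark.U → τ 0 x = Mark.U := by
    intro k
    induction k with
    | zero => intro _ x h; exact h
    | succ n ih => intro h x hx; exact ih (by omega) x (hτstep n (by omega) x hx)
  have hDρstep : ∀ i, i < b → ∀ x, Dpot lam E (ρ (i+1)) x ≤ Dpot lam E (ρ i) x := by
    intro i hi x
    rw [hρs i hi]
    exact Dpot_update_B_le hl.le (hSρ i (by omega))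
  have hDρ : ∀ k, k ≤ b → ∀ i, i ≤ k → ∀ x, Dpot lam E (ρ k) x ≤ Dpot lam E (ρ i) x := by
    intro k
    induction k with
    | zero =>
      intro _ i hi x
      have : i = 0 := by omega
      subst this; exact le_rfl
    | succ n ih =>
      intro h i hi x
      by_cases hin : i = n + 1
      · subst hin; exact le_rfl
      · exact le_trans (hDρstep n (by omega) x) (ih (by omega) i (by omega) x)
  have hDτ : ∀ j, j ≤ m → ∀ x, Dpot lam E (τ j) x ≤ lam⁻¹ ^ j * Dpot lam E (τ 0) x := by
    intro j
    induction j with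
    | zero => intro _ x; rw [pow_zero, one_mul]
    | succ n ih =>
      intro h x
      have h1 : Dpot lam E (τ (n+1)) x ≤ lam⁻¹ * Dpot lam E (τ n) x := by
        rw [hτs n (by omega)]
        exact Dpot_update_M_le hl hle (huU n (by omega)) (hSτ n (by omega))
      calc Dpot lam E (τ (n+1)) x ≤ lam⁻¹ * Dpot lam E (τ n) x := h1
        _ ≤ lam⁻¹ * (lam⁻¹ ^ n * Dpot lam E (τ 0) x) :=
          mul_le_mul_of_nonneg_left (ih (by omega) x) (inv_nonneg.mpr hl.le)
        _ = lam⁻¹ ^ (n+1) * Dpot lam E (τ 0) x := by ring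
  set A := ∑ i ∈ Finset.range b, deltaB lam E (ρ i) (v i) with hA
  have hkey : ∀ j, j < m → Dpot lam E (τ 0) (u j) ≤ A / b := by
    intro j hj
    have hUj : τ 0 (u j) = Mark.U := hτU j (by omega) _ (huU j hj)
    have hUρ : ∀ i, i ≤ b → ρ i (u j) = Mark.U := by
      intro i hi
      exact hρU b le_rfl i hi _ (by rw [← hτ0]; exact hUj)
    have hper : ∀ i, i < b → Dpot lam E (τ 0) (u j) ≤ deltaB lam E (ρ i) (v i) := by
      intro i hi
      calc Dpot lam E (τ 0) (u j) = Dpot lam E (ρ b) (u j) := by rw [hτ0]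
        _ ≤ Dpot lam E (ρ i) (u j) := hDρ b le_rfl i (by omega) _
        _ = deltaB lam E (ρ i) (u j) := (deltaB_eq hl.le (hSρ i (by omega))).symm
        _ ≤ deltaB lam E (ρ i) (v i) := hgreedy i hi _ (hUρ i (by omega))
    have hsumI : (b:ℝ) * Dpot lam E (τ 0) (u j) ≤ A := by
      have h2 := Finset.sum_le_sum (fun i hi => hper i (Finset.mem_range.mp hi))
      simpa [Finset.sum_const, Finset.card_range, nsmul_eq_mul] using h2
    rw [le_div_iff₀ hbpos]
    linarith
  have hM : ∀ j, j < m →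
      deltaM lam E (τ j) (u j) ≤ (lam⁻¹ - 1) * (lam⁻¹ ^ j * (A / b)) := by
    intro j hj
    rw [deltaM_eq hl (huU j hj) (hSτ j (by omega))]
    have h1 : Dpot lam E (τ j) (u j) ≤ lam⁻¹ ^ j * (A / b) := by
      calc Dpot lam E (τ j) (u j)
          ≤ lam⁻¹ ^ j * Dpot lam E (τ 0) (u j) := hDτ j (by omega) _
        _ ≤ lam⁻¹ ^ j * (A / b) :=
          mul_le_mul_of_nonneg_left (hkey j hj) (by positivity)
    exact mul_le_mul_of_nonneg_left h1 (by linarith)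
  calc ∑ j ∈ Finset.range m, deltaM lam E (τ j) (u j)
      ≤ ∑ j ∈ Finset.range m, (lam⁻¹ - 1) * (lam⁻¹ ^ j * (A / b)) :=
        Finset.sum_le_sum fun j hj => hM j (Finset.mem_range.mp hj)
    _ = (∑ j ∈ Finset.range m, lam⁻¹ ^ j) * (lam⁻¹ - 1) * (A / b) := by
        rw [Finset.sum_mul, Finset.sum_mul]
        exact Finset.sum_congr rfl fun j _ => by ring
    _ = (lam⁻¹ ^ m - 1) * (A / b) := by rw [geom_sum_mul]
    _ = A := by
        rw [hpow]
        field_simp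
        ring
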